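/- arXiv:2405.09991 — 3 statements merged into one kernel-verified Lean document; each statement's English description precedes it below -/
import Mathlib

section
/- Let a, b, c, d be complex numbers of modulus 1 with a+b+c+d=0. Then (a+d)(b+d)(c+d)=0; in particular, d=−a and c=−b, or d=−b and c=−a, or d=−c and b=−a. -/
open Matrix Complex

noncomputable section

/-- A complex Hadamard matrix: all entries unimodular, rows pairwise orthogonal. -/
def IsCHM {n : ℕ} (H : Matrix (Fin n) (Fin n) ℂ) : Prop :=
  (∀ i j, ‖H i j‖ = 1) ∧
  (∀ i j, i ≠ j → ∑ k, H i k * star (H j k) = 0)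

/-- A matrix is normalized if its first row and first column consist of ones. -/
def Normalized {n : ℕ} [NeZero n] (H : Matrix (Fin n) (Fin n) ℂ) : Prop :=
  (∀ j, H 0 j = 1) ∧ (∀ i, H i 0 = 1)

/-- Hadamard equivalence: permutations of rows and columns together with
multiplication of rows and columns by unimodular constants. -/
def HadEquiv {m n : ℕ} (H K : Matrix (Fin m) (Fin n) ℂ) : Prop :=
  ∃ (σ : Equiv.Perm (Fin m)) (τ : Equiv.Perm (Fin n)) (d : Fin m → ℂ) (e : Fin n → ℂ),
    (∀ i, ‖d i‖ = 1) ∧ (∀ j, ‖e j‖ = 1) ∧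
    (∀ i j, K i j = d i * e j * H (σ i) (τ j))

/-- The transposed Fourier matrix `F₆ᵀ(a,b)` built from `a`, `b` and
a primitive cube root of unity `w`. -/
def F6T (a b w : ℂ) : Matrix (Fin 6) (Fin 6) ℂ :=
  !![1, 1,   1,   1,  1,        1;
     1, 1,   1,  -1, -1,       -1;
     1, w,   w^2, a,  a*w,      a*w^2;
     1, w,   w^2,-a, -(a*w),   -(a*w^2);
     1, w^2, w,   b,  b*w^2,    b*w;
     1, w^2, w,  -b, -(b*w^2), -(b*w)]

/-- Membership (up to equivalence) in the transposed Fourier family. -/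
def MemF6T (H : Matrix (Fin 6) (Fin 6) ℂ) : Prop :=
  ∃ a b w : ℂ, ‖a‖ = 1 ∧ ‖b‖ = 1 ∧ 1 + w + w^2 = 0 ∧
    HadEquiv H (F6T a b w)

/-- The 2-circulant matrix `X₆(β,γ,ε,φ)`. -/
def X6 (β γ ε φ : ℂ) : Matrix (Fin 6) (Fin 6) ℂ :=
  !![1,  1,       1,          1,          1,        1;
     1, -1,      -(γ*ε)⁻¹,   -(β*φ)⁻¹,    (γ*ε)⁻¹,  (β*φ)⁻¹;
     1, -(ε/β),  -1,         -(ε/(γ*φ)),  ε/(γ*φ),  ε/β;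
     1, -(φ/γ),  -(φ/(β*ε)), -1,          φ/γ,      φ/(β*ε);
     1,  ε/β,     φ/(β*ε),    (β*φ)⁻¹,    (β*γ)⁻¹,  γ/β^2;
     1,  φ/γ,     (γ*ε)⁻¹,    ε/(γ*φ),    β/γ^2,    (β*γ)⁻¹]

/-- Membership (up to equivalence) in the 2-circulant family, with the
implicit unimodularity constraints and the defining polynomial equation. -/
def MemX6 (H : Matrix (Fin 6) (Fin 6) ℂ) : Prop :=
  ∃ β γ ε φ : ℂ, ‖β‖ = 1 ∧ ‖γ‖ = 1 ∧ ‖ε‖ = 1 ∧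
    ‖φ‖ = 1 ∧
    β*γ*ε^2 + β*γ*φ + β^2*ε*φ + γ*ε*φ + β*γ^2*ε*φ + β*γ*ε*φ^2 = 0 ∧
    HadEquiv H (X6 β γ ε φ)

/-- The Diţă matrix `D₆(c)`. -/
def D6 (c : ℂ) : Matrix (Fin 6) (Fin 6) ℂ :=
  !![1,  1,      1,  1,      1,      1;
     1, -1,      I, -I,     -(I*c),  I*c;
     1,  I,     -1,  I,     -I,     -I;
     1, -I,      I, -1,      I*c,   -(I*c);
     1, -(I/c), -I,  I/c,   -1,      I;
     1,  I/c,   -I, -(I/c),  I,     -1]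

/-- Membership (up to equivalence) in the Diţă family. -/
def MemD6 (H : Matrix (Fin 6) (Fin 6) ℂ) : Prop :=
  ∃ c : ℂ, ‖c‖ = 1 ∧ HadEquiv H (D6 c)

/-- Two rows are cancelling if two of the terms of their inner product cancel. -/
def Cancelling {n : ℕ} (r s : Fin n → ℂ) : Prop :=
  ∃ p q : Fin n, p ≠ q ∧ r p / s p + r q / s q = 0

/-- The first family of 3×6 matrices with pairwise cancelling rows. -/
def R1 (q : ℂ) : Matrix (Fin 3) (Fin 6) ℂ :=
  !![1,  1,  1,  1,  1,  1;
     1,  I,  1, -I, -1, -1;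
     1, -1, -I,  I,  q, -q]

/-- The second family of 3×6 matrices with pairwise cancelling rows. -/
def R2 (q : ℂ) : Matrix (Fin 3) (Fin 6) ℂ :=
  !![1,  1,  1,    1,      1,  1;
     1,  I, -1,   -I,      q, -q;
     1, -1, -q,    I*q, -(I*q), q]

/-- The inner-product-like sum `I((x,y))` over four selected columns. -/
def HI {m n : ℕ} (M : Matrix (Fin m) (Fin n) ℂ) (x y : Fin m) (c : Fin 4 → Fin n) : ℂ :=
  ∑ v, M x (c v) / M y (c v)

/-- The Haagerup condition for the 3×4 submatrix of `M` given by rows `i,j,k`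
and the four columns selected by `c`. -/
def HaagerupCond {m n : ℕ} (M : Matrix (Fin m) (Fin n) ℂ)
    (i j k : Fin m) (c : Fin 4 → Fin n) : Prop :=
  HI M i j c * HI M j k c * HI M k i c - 4 +
    HI M i j c * HI M j i c + HI M j k c * HI M k j c + HI M k i c * HI M i k c = 0

/-- The matrix `H(a)` of Proposition 6.3. -/
def Ha (a w : ℂ) : Matrix (Fin 6) (Fin 6) ℂ :=
  !![1,  1, 1,     1,      1,      1;
     1, -1, 1,    -1,      a,     -a;
     1,  1, w,     w,      w^2,    w^2;
     1, -1, w,    -w,      a*w^2, -(a*w^2);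
     1,  1, w^2,   w^2,    w,      w;
     1, -1, w^2, -(w^2),   a*w,   -(a*w)]

theorem Complex.inv_add_inv_add_inv_add_inv_eq_zero {a b c d : ℂ}
    (ha : ‖a‖ = 1) (hb : ‖b‖ = 1) (hc : ‖c‖ = 1) (hd : ‖d‖ = 1)
    (hsum : a + b + c + d = 0) :
    a⁻¹ + b⁻¹ + c⁻¹ + d⁻¹ = 0 := by
  rw [inv_eq_conj ha, inv_eq_conj hb, inv_eq_conj hc, inv_eq_conj hd]
  simpa only [map_add, map_zero] using congrArg (starRingEnd ℂ) hsum

/-- `(a+d)(b+d)(c+d) = abcd (a⁻¹ + b⁻¹ + c⁻¹ + d⁻¹) + d² (a + b + c + d)`. -/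
theorem add_mul_add_mul_add_eq_zero_of_sum_eq_zero_of_sum_inv_eq_zero {K : Type*} [Field K]
    {a b c d : K} (ha : a ≠ 0) (hb : b ≠ 0) (hc : c ≠ 0) (hd : d ≠ 0)
    (hsum : a + b + c + d = 0) (hinv : a⁻¹ + b⁻¹ + c⁻¹ + d⁻¹ = 0) :
    (a + d) * (b + d) * (c + d) = 0 := by
  have hesymm : b * c * d + a * c * d + a * b * d + a * b * c = 0 := by
    rw [← mul_zero (a * b * c * d), ← hinv]
    field_simp
  linear_combination hesymm + d ^ 2 * hsum

theorem eq_neg_pairs_of_add_mul_add_mul_add_eq_zero {R : Type*} [CommRing R] [NoZeroDivisors R]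
    {a b c d : R} (hsum : a + b + c + d = 0) (h : (a + d) * (b + d) * (c + d) = 0) :
    (d = -a ∧ c = -b) ∨ (d = -b ∧ c = -a) ∨ (d = -c ∧ b = -a) := by
  rcases mul_eq_zero.1 h with h | hcd
  · rcases mul_eq_zero.1 h with had | hbd
    · exact Or.inl ⟨eq_neg_of_add_eq_zero_right had, by linear_combination hsum - had⟩
    · exact Or.inr <| Or.inl ⟨eq_neg_of_add_eq_zero_right hbd, by linear_combination hsum - hbd⟩
  · exact Or.inr <| Or.inr ⟨eq_neg_of_add_eq_zero_right hcd, by linear_combination hsum - hcd⟩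

/-- If `a`, `b`, `c`, `d` are unimodular with `a + b + c + d = 0`,
then `(a+d)(b+d)(c+d) = 0`; in particular the four numbers pair up into
opposite pairs in one of three ways. -/
theorem stmt_2 (a b c d : ℂ)
    (ha : ‖a‖ = 1) (hb : ‖b‖ = 1)
    (hc : ‖c‖ = 1) (hd : ‖d‖ = 1)
    (hsum : a + b + c + d = 0) :
    (a + d) * (b + d) * (c + d) = 0 ∧
      ((d = -a ∧ c = -b) ∨ (d = -b ∧ c = -a) ∨ (d = -c ∧ b = -a)) := by
  have ne_zero {z : ℂ} (hz : ‖z‖ = 1) : z ≠ 0 := norm_ne_zero_iff.mp (hz ▸ one_ne_zero)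
  have hprod : (a + d) * (b + d) * (c + d) = 0 :=
    add_mul_add_mul_add_eq_zero_of_sum_eq_zero_of_sum_inv_eq_zero
      (ne_zero ha) (ne_zero hb) (ne_zero hc) (ne_zero hd) hsum
      (Complex.inv_add_inv_add_inv_add_inv_eq_zero ha hb hc hd hsum)
  exact ⟨hprod, eq_neg_pairs_of_add_mul_add_mul_add_eq_zero hsum hprod⟩
end
end

section
/- Let H be a normalized complex Hadamard matrix of order 6 containing three entries equal to −1 in one of its rows. Then, up to equivalence, H is a member of the transposed Fourier family F₆ᵀ(a,b). -/
/-!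
Permute rows and columns so that the three `-1`s sit in row 1, columns 3, 4, 5; orthogonality to
the row of ones then forces row 1 to be `(1, 1, 1, -1, -1, -1)`. Orthogonality to rows 0 and 1
splits every other row into two triples of unimodular numbers summing to zero, so it has the form
`(1, x, x², u, uω, uω²)` with `x, ω` primitive cube roots of unity. The inner product of two such
rows is `3[x = y] + 3 u v̄ [ω = η]`, so rows with equal `x` have equal `ω` and opposite `u`, while
rows with different `x` have different `ω`. Hence, after possibly swapping the last two columns,
`ω = x` on every row; as no three rows can have pairwise opposite `u`, the four remaining rows
form two pairs, which are the rows of `F₆ᵀ(a, b)`.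
-/

open Matrix Complex

noncomputable section

open ComplexConjugate

lemma mul_conj_of_norm_eq_one {z : ℂ} (hz : ‖z‖ = 1) : z * conj z = 1 := by
  rw [Complex.mul_conj', hz]; norm_num

lemma eq_one_of_norm_eq_one_of_one_le_re {z : ℂ} (hz : ‖z‖ = 1) (hre : 1 ≤ z.re) :
    z = 1 := by
  have hsq : z.re * z.re + z.im * z.im = 1 := by
    rw [← Complex.normSq_apply, ← Complex.sq_norm, hz, one_pow]
  have hle := hz ▸ Complex.re_le_norm z
  exact Complex.ext (by simp; linarith) (by simp; nlinarith)

lemma eq_one_of_norm_eq_one_of_add_eq_two {a b : ℂ} (ha : ‖a‖ = 1) (hb : ‖b‖ = 1)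
    (h : a + b = 2) : a = 1 ∧ b = 1 := by
  have hre : a.re + b.re = 2 := by simpa using congrArg Complex.re h
  exact ⟨eq_one_of_norm_eq_one_of_one_le_re ha (by linarith [hb ▸ Complex.re_le_norm b]),
    eq_one_of_norm_eq_one_of_one_le_re hb (by linarith [ha ▸ Complex.re_le_norm a])⟩

lemma exists_cube_root_of_add_add_eq_zero {a b c : ℂ} (ha : ‖a‖ = 1) (hb : ‖b‖ = 1)
    (hc : ‖c‖ = 1) (h : a + b + c = 0) :
    ∃ ω, 1 + ω + ω ^ 2 = 0 ∧ b = a * ω ∧ c = a * ω ^ 2 := by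
  have hconj : conj a + conj b + conj c = 0 := by simpa using congrArg conj h
  have key : a ^ 2 + a * b + b ^ 2 = 0 := by
    linear_combination (a + b) * h - a * b * c * hconj + b * c * mul_conj_of_norm_eq_one ha
      + a * c * mul_conj_of_norm_eq_one hb + a * b * mul_conj_of_norm_eq_one hc
  have ha0 : a ≠ 0 := by rintro rfl; simp at ha
  refine ⟨b / a, ?_, ?_, ?_⟩
  · field_simp; linear_combination key
  · field_simp
  · field_simp; linear_combination a * h - key

namespace CubeRoot

variable {x y ω η : ℂ}

lemma pow_three (hx : 1 + x + x ^ 2 = 0) : x ^ 3 = 1 := by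
  linear_combination (x - 1) * hx

lemma sq_sq (hx : 1 + x + x ^ 2 = 0) : (x ^ 2) ^ 2 = x := by
  linear_combination x * (x - 1) * hx

lemma eq_or_eq_sq (hx : 1 + x + x ^ 2 = 0) (hy : 1 + y + y ^ 2 = 0) : y = x ∨ y = x ^ 2 := by
  have : (y - x) * (y - x ^ 2) = 0 := by linear_combination hy + (x - 1 - y) * hx
  rcases mul_eq_zero.mp this with h | h
  · exact .inl (sub_eq_zero.mp h)
  · exact .inr (sub_eq_zero.mp h)

lemma sq_ne_self (hx : 1 + x + x ^ 2 = 0) : x ^ 2 ≠ x := fun h => by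
  have : (3 : ℂ) = 0 := by linear_combination (3 - 2 * x) * hx + (2 * x + 1) * h
  norm_num at this

lemma conj_eq_sq (hx : 1 + x + x ^ 2 = 0) : conj x = x ^ 2 := by
  have hc : 1 + conj x + conj x ^ 2 = 0 := by simpa using congrArg conj hx
  refine (eq_or_eq_sq hx hc).resolve_left fun h => ?_
  obtain ⟨r, rfl⟩ := Complex.conj_eq_iff_real.mp h
  have : 1 + r + r ^ 2 = 0 := by exact_mod_cast hx
  nlinarith [sq_nonneg (r + 1 / 2)]

lemma one_add_mul_conj_add (hx : 1 + x + x ^ 2 = 0) (hy : 1 + y + y ^ 2 = 0) :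
    1 + x * conj y + x ^ 2 * conj y ^ 2 = if x = y then 3 else 0 := by
  have h3 := pow_three hx
  rw [conj_eq_sq hy]
  split_ifs with hxy
  · subst hxy; linear_combination (x ^ 3 + 2) * h3
  · obtain rfl := (eq_or_eq_sq hx hy).resolve_left (Ne.symm hxy)
    linear_combination hx + (x ^ 2 + x * (x ^ 6 + x ^ 3 + 1)) * h3

lemma eq_iff_eq_of_eq_iff_eq {x' ω' : ℂ} (hx : 1 + x + x ^ 2 = 0) (hx' : 1 + x' + x' ^ 2 = 0)
    (hω : 1 + ω + ω ^ 2 = 0) (hω' : 1 + ω' + ω' ^ 2 = 0) (h : x = x' ↔ ω = ω') :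
    ω = x ↔ ω' = x' := by
  by_cases hxx : x = x'
  · rw [← hxx, ← h.mp hxx]
  obtain rfl := (eq_or_eq_sq hx hx').resolve_left (Ne.symm hxx)
  obtain rfl := (eq_or_eq_sq hω hω').resolve_left fun h' => hxx (h.mpr h'.symm)
  refine ⟨fun h' => by rw [h'], fun h' => ?_⟩
  refine (eq_or_eq_sq hx hω).resolve_right fun hωx => sq_ne_self hx ?_
  rw [hωx] at h'
  linear_combination -h' + x * pow_three hx

end CubeRoot

lemma Function.Injective.exists_perm_eq_comp {ι α : Type*} [Finite ι] {f g : ι → α}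
    (hf : f.Injective) (h : ∀ i, ∃ j, f i = g j) : ∃ σ : Equiv.Perm ι, g = f ∘ σ := by
  choose p hp using h
  have hp_inj : p.Injective := fun i j hij => hf (by rw [hp i, hp j, hij])
  let e := Equiv.ofBijective p (Finite.injective_iff_bijective.mp hp_inj)
  refine ⟨e.symm, funext fun j => ?_⟩
  simp only [Function.comp_apply, hp]
  exact congrArg g (e.apply_symm_apply j).symm

lemma HadEquiv.trans {m n : ℕ} {H K L : Matrix (Fin m) (Fin n) ℂ} (hHK : HadEquiv H K)
    (hKL : HadEquiv K L) : HadEquiv H L := by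
  obtain ⟨σ, τ, d, e, hd, he, hK⟩ := hHK
  obtain ⟨σ', τ', d', e', hd', he', hL⟩ := hKL
  refine ⟨σ'.trans σ, τ'.trans τ, fun i => d' i * d (σ' i), fun j => e' j * e (τ' j),
    fun i => by simp [hd, hd'], fun j => by simp [he, he'], fun i j => ?_⟩
  rw [hL, hK]
  simp only [Equiv.trans_apply]
  ring

lemma hadEquiv_submatrix {m n : ℕ} (H : Matrix (Fin m) (Fin n) ℂ) (σ : Equiv.Perm (Fin m))
    (τ : Equiv.Perm (Fin n)) : HadEquiv H (H.submatrix σ τ) :=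
  ⟨σ, τ, 1, 1, fun _ => by simp, fun _ => by simp, fun _ _ => by simp⟩

lemma MemF6T.of_hadEquiv {H K : Matrix (Fin 6) (Fin 6) ℂ} (hHK : HadEquiv H K)
    (hK : MemF6T K) : MemF6T H :=
  let ⟨a, b, w, ha, hb, hw, hKF⟩ := hK
  ⟨a, b, w, ha, hb, hw, hHK.trans hKF⟩

namespace IsCHM

variable {n : ℕ} {H : Matrix (Fin n) (Fin n) ℂ}

lemma submatrix (hH : IsCHM H) (σ τ : Equiv.Perm (Fin n)) : IsCHM (H.submatrix σ τ) := by
  refine ⟨fun i j => hH.1 _ _, fun i j hij => ?_⟩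
  simp only [Matrix.submatrix_apply]
  rw [Equiv.sum_comp τ (fun k => H (σ i) k * star (H (σ j) k))]
  exact hH.2 _ _ (σ.injective.ne hij)

lemma injective (hH : IsCHM H) : Function.Injective H := by
  intro i j hij
  by_contra hne
  have hsum := hH.2 i j hne
  simp only [hij, Complex.star_def, fun k => mul_conj_of_norm_eq_one (hH.1 j k),
    Finset.sum_const, Finset.card_univ, Fintype.card_fin, nsmul_eq_mul, mul_one] at hsum
  exact (Fin.pos i).ne' (by exact_mod_cast hsum)

end IsCHM

def cubeRow (x u ω : ℂ) : Fin 6 → ℂ := ![1, x, x ^ 2, u, u * ω, u * ω ^ 2]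

lemma cubeRow_comp_swap {x u ω : ℂ} (hω : 1 + ω + ω ^ 2 = 0) :
    cubeRow x u (ω ^ 2) ∘ Equiv.swap 4 5 = cubeRow x u ω := by
  funext j
  fin_cases j <;> simp [cubeRow, Equiv.swap_apply_of_ne_of_ne, CubeRoot.sq_sq hω]

lemma eq_iff_eq_and_neg_of_cubeRow_orthogonal {x y u v ω η : ℂ} (hx : 1 + x + x ^ 2 = 0)
    (hy : 1 + y + y ^ 2 = 0) (hω : 1 + ω + ω ^ 2 = 0) (hη : 1 + η + η ^ 2 = 0) (hu : u ≠ 0)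
    (hv : ‖v‖ = 1)
    (h : ∑ k, cubeRow x u ω k * star (cubeRow y v η k) = 0) :
    (x = y ↔ ω = η) ∧ (x = y → v = -u) := by
  have e : (if x = y then 3 else 0) + u * conj v * (if ω = η then 3 else 0) = 0 := by
    rw [← CubeRoot.one_add_mul_conj_add hx hy, ← CubeRoot.one_add_mul_conj_add hω hη, ← h]
    simp only [Fin.sum_univ_six, cubeRow, RCLike.star_def, cons_val_zero, cons_val_one, cons_val,
      map_one, map_pow, map_mul, mul_one]
    ring
  have hvv := mul_conj_of_norm_eq_one hv
  have huv : u * conj v ≠ 0 := mul_ne_zero hu fun h0 => by simp [h0] at hvv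
  by_cases hxy : x = y <;> by_cases hωη : ω = η <;> simp only [hxy, hωη, if_true, if_false] at e
  · exact ⟨iff_of_true hxy hωη, fun _ => by linear_combination v * e / 3 - u * hvv⟩
  · norm_num at e
  · exact absurd (by linear_combination e / 3) huv
  · exact ⟨iff_of_false hxy hωη, fun h => absurd h hxy⟩

lemma row_one_eq {M : Matrix (Fin 6) (Fin 6) ℂ} (hM : IsCHM M) (h0 : ∀ j, M 0 j = 1)
    (hc : ∀ i, M i 0 = 1) (h3 : M 1 3 = -1) (h4 : M 1 4 = -1) (h5 : M 1 5 = -1) :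
    M 1 = ![1, 1, 1, -1, -1, -1] := by
  have horth := hM.2 1 0 (by decide)
  simp only [Fin.sum_univ_six, h0, star_one, mul_one, hc, h3, h4, h5] at horth
  obtain ⟨h1, h2⟩ := eq_one_of_norm_eq_one_of_add_eq_two (hM.1 1 1) (hM.1 1 2)
    (by linear_combination horth)
  funext j
  fin_cases j <;> simp [hc, h1, h2, h3, h4, h5]

lemma exists_row_eq_cubeRow {M : Matrix (Fin 6) (Fin 6) ℂ} (hM : IsCHM M)
    (h0 : ∀ j, M 0 j = 1) (hc : ∀ i, M i 0 = 1) (h1 : M 1 = ![1, 1, 1, -1, -1, -1])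
    {r : Fin 6} (hr : 2 ≤ r) :
    ∃ x u ω, 1 + x + x ^ 2 = 0 ∧ 1 + ω + ω ^ 2 = 0 ∧ ‖u‖ = 1 ∧ M r = cubeRow x u ω := by
  have e0 := hM.2 r 0 (by rintro rfl; exact absurd hr (by decide))
  have e1 := hM.2 r 1 (by rintro rfl; exact absurd hr (by decide))
  simp only [Fin.sum_univ_six, h0, h1, hc, RCLike.star_def, cons_val_zero, cons_val_one, cons_val,
    map_one, map_neg, mul_one, mul_neg] at e0 e1
  obtain ⟨x, hx, hx1, hx2⟩ := exists_cube_root_of_add_add_eq_zero norm_one (hM.1 r 1) (hM.1 r 2)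
    (by linear_combination (e0 + e1) / 2)
  obtain ⟨ω, hω, h4, h5⟩ := exists_cube_root_of_add_add_eq_zero (hM.1 r 3) (hM.1 r 4)
    (hM.1 r 5) (by linear_combination (e0 - e1) / 2)
  refine ⟨x, M r 3, ω, hx, hω, hM.1 r 3, funext fun j => ?_⟩
  fin_cases j <;> simp [cubeRow, hc, hx1, hx2, h4, h5]

lemma exists_F6T_eq_cubeRow_self {a b w v : ℂ} (hv : v = a ∨ v = -a) :
    ∃ p, F6T a b w p = cubeRow w v w := by
  rcases hv with rfl | rfl
  · exact ⟨2, rfl⟩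
  · refine ⟨3, funext fun j => ?_⟩
    fin_cases j <;> simp [F6T, cubeRow]

lemma exists_F6T_eq_cubeRow_sq {a b w v : ℂ} (hw : 1 + w + w ^ 2 = 0) (hv : v = b ∨ v = -b) :
    ∃ p, F6T a b w p = cubeRow (w ^ 2) v (w ^ 2) := by
  rcases hv with rfl | rfl
  · refine ⟨4, funext fun j => ?_⟩
    fin_cases j <;> simp [F6T, cubeRow, CubeRoot.sq_sq hw]
  · refine ⟨5, funext fun j => ?_⟩
    fin_cases j <;> simp [F6T, cubeRow, CubeRoot.sq_sq hw]

lemma exists_F6T_eq_cubeRow {x u : Fin 6 → ℂ} (hx : ∀ r, 2 ≤ r → 1 + x r + x r ^ 2 = 0)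
    (hu : ∀ r, 2 ≤ r → ‖u r‖ = 1)
    (hpair : ∀ r s, 2 ≤ r → 2 ≤ s → r ≠ s → x r = x s → u s = -u r) :
    ∃ a b w, ‖a‖ = 1 ∧ ‖b‖ = 1 ∧ 1 + w + w ^ 2 = 0 ∧
      ∀ r, 2 ≤ r → ∃ p, F6T a b w p = cubeRow (x r) (u r) (x r) := by
  have hsign : ∀ r s, 2 ≤ r → 2 ≤ s → x r = x s → u r = u s ∨ u r = -u s :=
    fun r s hr hs h => (eq_or_ne r s).imp (congrArg u) fun hrs => hpair s r hs hr hrs.symm h.symm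
  obtain ⟨C, hC, hxC⟩ : ∃ C, 2 ≤ C ∧ x C ≠ x 2 := by
    -- three rows with the same `x` would have pairwise opposite `u`
    by_contra! hall
    have h23 := hpair 2 3 le_rfl (by decide) (by decide) (hall 3 (by decide)).symm
    have h24 := hpair 2 4 le_rfl (by decide) (by decide) (hall 4 (by decide)).symm
    have h34 := hpair 3 4 (by decide) (by decide) (by decide)
      ((hall 3 (by decide)).trans (hall 4 (by decide)).symm)
    have : u 2 = 0 := by linear_combination (h24 - h34 + h23) / 2
    simpa [this] using hu 2 le_rfl
  have hw := hx 2 le_rfl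
  have hxC' : x C = x 2 ^ 2 := (CubeRoot.eq_or_eq_sq hw (hx C hC)).resolve_left hxC
  refine ⟨u 2, u C, x 2, hu 2 le_rfl, hu C hC, hw, fun r hr => ?_⟩
  rcases CubeRoot.eq_or_eq_sq hw (hx r hr) with h | h
  · rw [h]; exact exists_F6T_eq_cubeRow_self (hsign r 2 hr le_rfl h)
  · rw [h]; exact exists_F6T_eq_cubeRow_sq hw (hsign r C hr hC (h.trans hxC'.symm))

lemma memF6T_of_row_one {M : Matrix (Fin 6) (Fin 6) ℂ} (hM : IsCHM M) (h0 : ∀ j, M 0 j = 1)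
    (hc : ∀ i, M i 0 = 1) (h1 : M 1 = ![1, 1, 1, -1, -1, -1]) : MemF6T M := by
  choose! x u ω hx hω hu hrow using fun r (hr : 2 ≤ r) => exists_row_eq_cubeRow hM h0 hc h1 hr
  have hpair : ∀ r s, 2 ≤ r → 2 ≤ s → r ≠ s →
      (x r = x s ↔ ω r = ω s) ∧ (x r = x s → u s = -u r) := fun r s hr hs hrs =>
    eq_iff_eq_and_neg_of_cubeRow_orthogonal (hx r hr) (hx s hs) (hω r hr) (hω s hs)
      (norm_ne_zero_iff.mp (by rw [hu r hr]; exact one_ne_zero)) (hu s hs)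
      (by rw [← hrow r hr, ← hrow s hs]; exact hM.2 r s hrs)
  obtain ⟨τ, hτ1, hτ⟩ : ∃ τ : Equiv.Perm (Fin 6),
      M 1 ∘ τ = M 1 ∧ ∀ r, 2 ≤ r → M r ∘ τ = cubeRow (x r) (u r) (x r) := by
    have hω_iff : ∀ r, 2 ≤ r → (ω r = x r ↔ ω 2 = x 2) := fun r hr => by
      rcases eq_or_ne r 2 with rfl | hr2
      · rfl
      exact (CubeRoot.eq_iff_eq_of_eq_iff_eq (hx 2 le_rfl) (hx r hr) (hω 2 le_rfl) (hω r hr)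
        (hpair 2 r le_rfl hr hr2.symm).1).symm
    by_cases h2 : ω 2 = x 2
    · exact ⟨1, rfl, fun r hr => by rw [hrow r hr, ← (hω_iff r hr).mpr h2]; rfl⟩
    refine ⟨Equiv.swap 4 5, by rw [h1]; funext j; fin_cases j <;> rfl, fun r hr => ?_⟩
    have hωr : ω r = x r ^ 2 :=
      (CubeRoot.eq_or_eq_sq (hx r hr) (hω r hr)).resolve_left (mt (hω_iff r hr).mp h2)
    rw [hrow r hr, hωr, cubeRow_comp_swap (hx r hr)]
  obtain ⟨a, b, w, ha, hb, hw, hF⟩ :=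
    exists_F6T_eq_cubeRow hx hu fun r s hr hs hrs => (hpair r s hr hs hrs).2
  have hrows : ∀ r, ∃ p, M.submatrix id τ r = F6T a b w p := by
    intro r
    rcases (show r = 0 ∨ r = 1 ∨ 2 ≤ r by omega) with rfl | rfl | hr
    · refine ⟨0, funext fun j => ?_⟩
      simp only [Matrix.submatrix_apply, id, h0]
      fin_cases j <;> rfl
    · exact ⟨1, hτ1.trans (by rw [h1]; funext j; fin_cases j <;> rfl)⟩
    · obtain ⟨p, hp⟩ := hF r hr
      exact ⟨p, (hτ r hr).trans hp.symm⟩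
  obtain ⟨σ, hσ⟩ :=
    (τ.surjective.injective_comp_right.comp hM.injective).exists_perm_eq_comp hrows
  exact ⟨a, b, w, ha, hb, hw, hσ ▸ hadEquiv_submatrix M σ τ⟩

/-- A normalized complex Hadamard matrix of order 6 containing
three `-1` entries in one of its rows is, up to equivalence, a member of the
transposed Fourier family. -/
theorem stmt_3 (H : Matrix (Fin 6) (Fin 6) ℂ)
    (hH : IsCHM H) (hnorm : Normalized H)
    (hrow : ∃ i j₁ j₂ j₃ : Fin 6, j₁ ≠ j₂ ∧ j₁ ≠ j₃ ∧ j₂ ≠ j₃ ∧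
      H i j₁ = -1 ∧ H i j₂ = -1 ∧ H i j₃ = -1) :
    MemF6T H := by
  obtain ⟨i, j₁, j₂, j₃, h12, h13, h23, e₁, e₂, e₃⟩ := hrow
  obtain ⟨h0, hc⟩ := hnorm
  have hi : i ≠ 0 := by rintro rfl; norm_num [h0] at e₁
  have hj : ∀ j, H i j = -1 → j ≠ 0 := by rintro j hj rfl; norm_num [hc] at hj
  obtain ⟨τ, hτ0, hτ3, hτ4, hτ5⟩ :
      ∃ τ : Equiv.Perm (Fin 6), τ 0 = 0 ∧ τ 3 = j₁ ∧ τ 4 = j₂ ∧ τ 5 = j₃ := by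
    have h₁ := hj j₁ e₁
    have h₂ := hj j₂ e₂
    have h₃ := hj j₃ e₃
    obtain ⟨τ, hτ⟩ := Equiv.Perm.exists_extending_pair ![0, 3, 4, 5] ![0, j₁, j₂, j₃]
      (by decide) (by intro a b; fin_cases a <;> fin_cases b <;> simp_all [eq_comm])
    exact ⟨τ, hτ 0, hτ 1, hτ 2, hτ 3⟩
  have hσ0 : Equiv.swap 1 i 0 = 0 := Equiv.swap_apply_of_ne_of_ne (by decide) hi.symm
  have hM0 : ∀ j, H.submatrix (Equiv.swap 1 i) τ 0 j = 1 := fun j => by simp [hσ0, h0]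
  have hMc : ∀ p, H.submatrix (Equiv.swap 1 i) τ p 0 = 1 := fun p => by simp [hτ0, hc]
  refine MemF6T.of_hadEquiv (hadEquiv_submatrix H _ τ) (memF6T_of_row_one (hH.submatrix _ τ)
    hM0 hMc (row_one_eq (hH.submatrix _ τ) hM0 hMc ?_ ?_ ?_)) <;>
  simp [hτ3, hτ4, hτ5, e₁, e₂, e₃]
end
end

section
/- Let H be a complex Hadamard matrix of order 6 whose upper-left 4×4 submatrix has rows (1,1,1,1), (1,−1,1,−1), (1,b,p,q), (1,−b,w,−qw/p). Then (b−qw)(1+w+w²)=0. -/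
/-!
Write `t i ∈ ℂ²` (`lastTwo`) for the last two entries of row `i` of `H` and `s i j`
(`headInner`) for the Hermitian product of the first four entries of rows `i` and `j`, so that
orthogonality of the rows reads `⟪t j, t i⟫ = -s i j`. Since `s 0 1 = 0`, the vectors `t 0`,
`t 1` form an orthogonal basis of `ℂ²` whose vectors both have norm `√2`, and as `s 2 3 = 0`
as well, Parseval's identity for `⟪t 2, t 3⟫ = 0` and `‖t 3‖² = 2` reads
`s 0 2 * s 3 0 + s 1 2 * s 3 1 = 0` and `s 0 3 * s 3 0 + s 1 3 * s 3 1 = 4`. With unimodular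
entries the first identity becomes `(q - b p)(b - q w) = 0`, and when `q = b p` the second one
becomes `|1 + w|² = 1`, i.e. `1 + w + w² = 0`.
-/

open Matrix Complex

noncomputable section

open Module InnerProductSpace

theorem inner_mul_inner_add_inner_mul_inner_of_finrank_eq_two {𝕜 E : Type*} [RCLike 𝕜]
    [NormedAddCommGroup E] [InnerProductSpace 𝕜 E] (hE : finrank 𝕜 E = 2) {u v : E}
    (hu : u ≠ 0) (hv : ‖v‖ = ‖u‖) (huv : ⟪u, v⟫_𝕜 = 0) (x y : E) :
    ⟪x, u⟫_𝕜 * ⟪u, y⟫_𝕜 + ⟪x, v⟫_𝕜 * ⟪v, y⟫_𝕜 = (‖u‖ : 𝕜) ^ 2 * ⟪x, y⟫_𝕜 := by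
  have hc : (‖u‖ : 𝕜) ≠ 0 := by simpa using hu
  let e : Fin 2 → E := ![(‖u‖ : 𝕜)⁻¹ • u, (‖u‖ : 𝕜)⁻¹ • v]
  have he : Orthonormal 𝕜 e := by
    rw [orthonormal_iff_ite]
    intro i j
    fin_cases i <;> fin_cases j <;>
      simp [e, inner_smul_left, inner_smul_right, huv, inner_eq_zero_symm.mp huv,
        inner_self_eq_norm_sq_to_K, norm_smul, hv, hu]
  have hspan := (basisOfOrthonormalOfCardEqFinrank he (by simp [hE])).span_eq.ge
  have parseval := (OrthonormalBasis.mk he (by simpa using hspan)).sum_inner_mul_inner x y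
  simp only [Fin.sum_univ_two, OrthonormalBasis.coe_mk, e, Matrix.cons_val_zero,
    Matrix.cons_val_one, inner_smul_left, inner_smul_right, RCLike.conj_ofReal,
    map_inv₀] at parseval
  rw [← parseval]
  field_simp

def lastTwo {n : ℕ} (r : Fin (n + 2) → ℂ) : EuclideanSpace ℂ (Fin 2) :=
  WithLp.toLp 2 fun k => r (Fin.natAdd n k)

def headInner {n : ℕ} (r s : Fin (n + 2) → ℂ) : ℂ :=
  ∑ k : Fin n, r (Fin.castAdd 2 k) * star (s (Fin.castAdd 2 k))

lemma sum_mul_star_eq_headInner_add_inner {n : ℕ} (r s : Fin (n + 2) → ℂ) :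
    ∑ k, r k * star (s k) = headInner r s + ⟪lastTwo s, lastTwo r⟫_ℂ := by
  rw [Fin.sum_univ_add]
  simp [headInner, lastTwo, PiLp.inner_apply]

lemma norm_lastTwo_sq {n : ℕ} {r : Fin (n + 2) → ℂ} (hr : ∀ k, ‖r k‖ = 1) :
    ‖lastTwo r‖ ^ 2 = 2 := by
  rw [EuclideanSpace.norm_sq_eq]
  simp [lastTwo, hr]

lemma headInner_parseval {n : ℕ} {r : Fin 4 → Fin (n + 2) → ℂ} (habs : ∀ i k, ‖r i k‖ = 1)
    (horth : ∀ i j, i ≠ j → ∑ k, r i k * star (r j k) = 0)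
    (h01 : headInner (r 0) (r 1) = 0) (h23 : headInner (r 2) (r 3) = 0) :
    headInner (r 0) (r 2) * headInner (r 3) (r 0) +
        headInner (r 1) (r 2) * headInner (r 3) (r 1) = 0 ∧
      headInner (r 0) (r 3) * headInner (r 3) (r 0) +
        headInner (r 1) (r 3) * headInner (r 3) (r 1) = 4 := by
  have tail : ∀ i j, i ≠ j → ⟪lastTwo (r j), lastTwo (r i)⟫_ℂ = -headInner (r i) (r j) := by
    intro i j hij
    linear_combination (sum_mul_star_eq_headInner_add_inner (r i) (r j)).symm.trans (horth i j hij)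
  have hnorm : ∀ i, ‖lastTwo (r i)‖ ^ 2 = 2 := fun i => norm_lastTwo_sq (habs i)
  have hne : lastTwo (r 0) ≠ 0 := by
    intro h
    simpa [h] using hnorm 0
  have hsame : ‖lastTwo (r 1)‖ = ‖lastTwo (r 0)‖ := by
    rw [← sq_eq_sq₀ (norm_nonneg _) (norm_nonneg _), hnorm, hnorm]
  have h01' : ⟪lastTwo (r 0), lastTwo (r 1)⟫_ℂ = 0 :=
    inner_eq_zero_symm.mp (by rw [tail 0 1 (by decide), h01, neg_zero])
  have h23' : ⟪lastTwo (r 2), lastTwo (r 3)⟫_ℂ = 0 :=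
    inner_eq_zero_symm.mp (by rw [tail 2 3 (by decide), h23, neg_zero])
  have parseval := inner_mul_inner_add_inner_mul_inner_of_finrank_eq_two
    finrank_euclideanSpace_fin hne hsame h01'
  constructor
  · have h := parseval (lastTwo (r 2)) (lastTwo (r 3))
    rw [tail 0 2 (by decide), tail 3 0 (by decide), tail 1 2 (by decide), tail 3 1 (by decide),
      h23'] at h
    linear_combination h
  · have h := parseval (lastTwo (r 3)) (lastTwo (r 3))
    rw [tail 0 3 (by decide), tail 3 0 (by decide), tail 1 3 (by decide), tail 3 1 (by decide),
      inner_self_eq_norm_sq_to_K, ← RCLike.ofReal_pow, ← RCLike.ofReal_pow, hnorm, hnorm] at h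
    norm_num at h
    linear_combination h

theorem sub_mul_one_add_add_sq_eq_zero {K : Type*} [Field K] [CharZero K] {b p q w : K}
    (hb : b ≠ 0) (hp : p ≠ 0) (hq : q ≠ 0) (hw : w ≠ 0)
    (hcross : (1 + b⁻¹ + p⁻¹ + q⁻¹) * (1 - b + w - q * w / p) +
      (1 - b⁻¹ + p⁻¹ - q⁻¹) * (1 + b + w + q * w / p) = 0)
    (hnorm : (1 - b⁻¹ + w⁻¹ - p / (q * w)) * (1 - b + w - q * w / p) +
      (1 + b⁻¹ + w⁻¹ + p / (q * w)) * (1 + b + w + q * w / p) = 4) :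
    (b - q * w) * (1 + w + w ^ 2) = 0 := by
  have hfactor : (q - b * p) * (b - q * w) * (2 * p) = 0 := by
    field_simp at hcross
    linear_combination hcross
  rcases mul_eq_zero.mp ((mul_eq_zero.mp hfactor).resolve_right (by simpa using hp))
    with hqbp | hbqw
  · obtain rfl : q = b * p := sub_eq_zero.mp hqbp
    have hcube : (1 + w + w ^ 2) * (4 * b) = 0 := by
      field_simp at hnorm
      linear_combination hnorm
    rw [(mul_eq_zero.mp hcube).resolve_right (by simpa using hb), mul_zero]
  · rw [hbqw, zero_mul]

/-- If the upper-left 4×4 submatrix of a complex Hadamard matrix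
of order 6 is `!![1,1,1,1; 1,-1,1,-1; 1,b,p,q; 1,-b,w,-qw/p]`, then
`(b - qw)(1 + w + w²) = 0`. -/
theorem stmt_15 (H : Matrix (Fin 6) (Fin 6) ℂ) (hH : IsCHM H)
    (b p q w : ℂ)
    (hsub : ∀ i j : Fin 4,
      H (Fin.castLE (by norm_num) i) (Fin.castLE (by norm_num) j) =
        !![1, 1, 1, 1; 1, -1, 1, -1; 1, b, p, q; 1, -b, w, -(q * w / p)] i j) :
    (b - q * w) * (1 + w + w^2) = 0 := by
  obtain ⟨habs, horth⟩ := hH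
  have hb : ‖b‖ = 1 := (congrArg norm (hsub 2 1)).symm.trans (habs _ _)
  have hp : ‖p‖ = 1 := (congrArg norm (hsub 2 2)).symm.trans (habs _ _)
  have hq : ‖q‖ = 1 := (congrArg norm (hsub 2 3)).symm.trans (habs _ _)
  have hw : ‖w‖ = 1 := (congrArg norm (hsub 3 2)).symm.trans (habs _ _)
  have hne : ∀ {z : ℂ}, ‖z‖ = 1 → z ≠ 0 := fun hz => norm_ne_zero_iff.mp (by simp [hz])
  have hconj : ∀ {z : ℂ}, ‖z‖ = 1 → starRingEnd ℂ z = z⁻¹ := fun hz => (inv_eq_conj hz).symm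
  obtain ⟨hcross, hnorm⟩ := headInner_parseval (n := 4) (r := fun i => H (Fin.castAdd 2 i))
    (fun _ _ => habs _ _) (fun i j hij => horth _ _ ((Fin.castAdd_injective 4 2).ne hij))
    (by simp only [headInner, Fin.castAdd, hsub]; simp [Fin.sum_univ_four])
    (by
      simp only [headInner, Fin.castAdd, hsub, Fin.isValue, of_apply, cons_val', cons_val_fin_one,
        cons_val, cons_val_one, cons_val_zero, RCLike.star_def, Fin.sum_univ_four, map_one, mul_one,
        map_neg, mul_neg, map_div₀, map_mul, div_inv_eq_mul, hconj hb, hconj hp, hconj hq, hconj hw]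
      field_simp [hne hb, hne hq, hne hw]
      ring)
  simp only [headInner, Fin.castAdd, hsub, Fin.isValue, of_apply, cons_val', cons_val_fin_one,
    cons_val_zero, cons_val, cons_val_one, RCLike.star_def, Fin.sum_univ_four, map_one, mul_one,
    one_mul, neg_mul, map_neg, mul_neg, neg_neg, map_div₀, map_mul, div_inv_eq_mul, hconj hb,
    hconj hp, hconj hq, hconj hw] at hcross hnorm
  refine sub_mul_one_add_add_sq_eq_zero (hne hb) (hne hp) (hne hq) (hne hw) ?_ ?_
  · linear_combination hcross
  · linear_combination hnorm
end
end
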